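/- Existential quantifier commutes into the p-box: for every valuation ε, pGCL program s, well-formed pDL formula φ, logical variable l, and expectation lower bound p, if ε ⊨ ∃l·[s]_p φ (i.e., ε ⊨ ([s]_p φ)[l:=v] for some v in the domain of l), then ε ⊨ [s]_p (∃l·φ). -/

import Mathlib

namespace PGCL

/-- Program valuations: maps from program variables to real values. -/
abbrev PVal : Type := String → ℝ

/-- Logical environments: maps from logical variables to their values.
    Logical variables are disjoint from program variables and cannot be
    accessed by programs. -/
abbrev LEnv : Type := String → ℝ

/-- Syntax of the probabilistic guarded command language pGCL.
    Expressions are embedded shallowly as functions of the valuation. -/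
inductive Stmt : Type
  | skip : Stmt
  | assign (x : String) (e : PVal → ℝ) : Stmt
  | seq (s₁ s₂ : Stmt) : Stmt
  /-- demonic (non-deterministic) choice `s₁ ⊓ s₂` -/
  | dem (s₁ s₂ : Stmt) : Stmt
  /-- probabilistic choice `s₁ [e] s₂` -/
  | prob (e : PVal → ℝ) (s₁ s₂ : Stmt) : Stmt
  | ifte (e : PVal → Bool) (s₁ s₂ : Stmt) : Stmt
  | whileLoop (e : PVal → Bool) (s : Stmt) : Stmt

/-- States of the MDP semantics: a valuation paired with the remaining program.
    `(ε, Stmt.skip)` is final. -/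
abbrev PState : Type := PVal × Stmt

/-- A positional policy resolves each demonic choice (true = left branch). -/
abbrev Policy : Type := PState → Bool

/-- One-step transition relation of the MDP semantics of pGCL, under policy `π`:
    `Step π σ p σ'` means σ steps to σ' with probability `p`. -/
inductive Step (π : Policy) : PState → ℝ → PState → Prop
  | assign {ε : PVal} {x : String} {e : PVal → ℝ} :
      Step π (ε, Stmt.assign x e) 1 (Function.update ε x (e ε), Stmt.skip)
  | seqSkip {ε ε' : PVal} {s₁ s₂ : Stmt} {p : ℝ} :
      Step π (ε, s₁) p (ε', s₂) → Step π (ε, Stmt.seq Stmt.skip s₁) p (ε', s₂)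
  | seqStep {ε ε' : PVal} {s₁ s₂ s : Stmt} {p : ℝ} :
      Step π (ε, s₁) p (ε', s₂) → Step π (ε, Stmt.seq s₁ s) p (ε', Stmt.seq s₂ s)
  | probL {ε : PVal} {e : PVal → ℝ} {s₁ s₂ : Stmt} :
      0 ≤ e ε → e ε ≤ 1 → Step π (ε, Stmt.prob e s₁ s₂) (e ε) (ε, s₁)
  | probR {ε : PVal} {e : PVal → ℝ} {s₁ s₂ : Stmt} :
      0 ≤ e ε → e ε ≤ 1 → Step π (ε, Stmt.prob e s₁ s₂) (1 - e ε) (ε, s₂)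
  | demL {ε : PVal} {s₁ s₂ : Stmt} :
      π (ε, Stmt.dem s₁ s₂) = true → Step π (ε, Stmt.dem s₁ s₂) 1 (ε, s₁)
  | demR {ε : PVal} {s₁ s₂ : Stmt} :
      π (ε, Stmt.dem s₁ s₂) = false → Step π (ε, Stmt.dem s₁ s₂) 1 (ε, s₂)
  | iteT {ε : PVal} {e : PVal → Bool} {s₁ s₂ : Stmt} :
      e ε = true → Step π (ε, Stmt.ifte e s₁ s₂) 1 (ε, s₁)
  | iteF {ε : PVal} {e : PVal → Bool} {s₁ s₂ : Stmt} :
      e ε = false → Step π (ε, Stmt.ifte e s₁ s₂) 1 (ε, s₂)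
  | whileT {ε : PVal} {e : PVal → Bool} {s : Stmt} :
      e ε = true →
        Step π (ε, Stmt.whileLoop e s) 1 (ε, Stmt.seq s (Stmt.whileLoop e s))
  | whileF {ε : PVal} {e : PVal → Bool} {s : Stmt} :
      e ε = false → Step π (ε, Stmt.whileLoop e s) 1 (ε, Stmt.skip)

/-- Finite paths under a policy `π` from a state to a final state. -/
inductive MPath (π : Policy) : PState → Type
  | nil (ε : PVal) : MPath π (ε, Stmt.skip)
  | cons {σ σ' : PState} (p : ℝ) (h : Step π σ p σ') (rest : MPath π σ') : MPath π σ

/-- The probability of a path: the product of its transition probabilities. -/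
noncomputable def MPath.prob {π : Policy} : {σ : PState} → MPath π σ → ℝ
  | _, .nil _ => 1
  | _, .cons p _ rest => p * rest.prob

/-- The valuation in the final state of a path. -/
def MPath.finalVal {π : Policy} : {σ : PState} → MPath π σ → PVal
  | _, .nil ε => ε
  | _, .cons _ _ rest => rest.finalVal

/-- Expected reward `E_{σ,π} r`: the sum over all paths from σ under π of the
    probability of the path times the reward of its final valuation. -/
noncomputable def expReward (π : Policy) (σ : PState) (r : PVal → ℝ) : ℝ :=
  ∑' ρ : MPath π σ, ρ.prob * r ρ.finalVal

/-- Expectation `𝔼_σ r`: infimum over all policies of the expected reward. -/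
noncomputable def expectation (σ : PState) (r : PVal → ℝ) : ℝ :=
  ⨅ π : Policy, expReward π σ r

open Classical in
/-- Characteristic (indicator) function of a proposition. -/
noncomputable def ind (P : Prop) : ℝ := if P then 1 else 0

/-- Formulae of probabilistic dynamic logic pDL. Atomic formulae are embedded
    shallowly as predicates over the program valuation and logical environment. -/
inductive Formula : Type
  | atom (A : PVal → LEnv → Prop) : Formula
  | neg (φ : Formula) : Formula
  | conj (φ₁ φ₂ : Formula) : Formula
  /-- universal quantification over the logical variable `l` (domain ℝ) -/
  | all (l : String) (φ : Formula) : Formula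
  /-- the p-box modality `[s]_p φ` -/
  | box (s : Stmt) (p : PVal → ℝ) (φ : Formula) : Formula

/-- Satisfaction `ε, η ⊨ φ` of pDL formulae. -/
def Sat : Formula → PVal → LEnv → Prop
  | .atom A, ε, η => A ε η
  | .neg φ, ε, η => ¬ Sat φ ε η
  | .conj φ₁ φ₂, ε, η => Sat φ₁ ε η ∧ Sat φ₂ ε η
  | .all l φ, ε, η => ∀ v : ℝ, Sat φ ε (Function.update η l v)
  | .box s p φ, ε, η => p ε ≤ expectation (ε, s) (fun ε' => ind (Sat φ ε' η))

/-- Disjunction `φ₁ ∨ φ₂ := ¬(¬φ₁ ∧ ¬φ₂)`. -/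
def Formula.disj (φ₁ φ₂ : Formula) : Formula := .neg (.conj (.neg φ₁) (.neg φ₂))

/-- Existential quantification `∃l·φ := ¬∀l·¬φ`. -/
def Formula.ex (l : String) (φ : Formula) : Formula := .neg (.all l (.neg φ))

/-- A program is purely probabilistic if it contains no demonic choice. -/
def DemFree : Stmt → Prop
  | .skip => True
  | .assign _ _ => True
  | .seq s₁ s₂ => DemFree s₁ ∧ DemFree s₂
  | .dem _ _ => False
  | .prob _ s₁ s₂ => DemFree s₁ ∧ DemFree s₂
  | .ifte _ s₁ s₂ => DemFree s₁ ∧ DemFree s₂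
  | .whileLoop _ s => DemFree s

end PGCL

open PGCL

/-! `φ[l:=v]` implies `∃l·φ` pointwise, so the indicator of the former lies below that of the
latter, and expectations are monotone in the reward. Monotonicity needs summability, because
expected rewards are real `tsum`s (junk `0` on non-summable families): the probabilities of
the terminating paths from a state sum to at most `1`. This follows by induction on path
length, splitting the paths by their first transition; a state has at most two transitions,
with probabilities `q` and `1 - q`. -/

namespace PGCL

variable {π : Policy}

theorem Step.prob_nonneg {σ σ' : PState} {p : ℝ} (h : Step π σ p σ') : 0 ≤ p := by
  induction h <;> first | assumption | linarith

theorem Step.exists_pair (ε : PVal) (s : Stmt) :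
    ∃ q ∈ Set.Icc (0 : ℝ) 1, ∃ τ₁ τ₂ : PState, ∀ {p σ'}, Step π (ε, s) p σ' →
      (p, σ') = (q, τ₁) ∨ (p, σ') = (1 - q, τ₂) := by
  induction s generalizing ε with
  | skip => exact ⟨1, by simp, (ε, .skip), (ε, .skip), fun h => by cases h⟩
  | assign x e =>
    exact ⟨1, by simp, (Function.update ε x (e ε), .skip), (ε, .skip), fun h => by cases h; simp⟩
  | seq s₁ s₂ ih₁ ih₂ =>
    by_cases h₁ : s₁ = .skip
    · subst h₁
      obtain ⟨q, hq, τ₁, τ₂, hτ⟩ := ih₂ ε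
      refine ⟨q, hq, τ₁, τ₂, fun h => ?_⟩
      cases h with
      | seqSkip h => exact hτ h
      | seqStep h => cases h
    · obtain ⟨q, hq, τ₁, τ₂, hτ⟩ := ih₁ ε
      refine ⟨q, hq, (τ₁.1, .seq τ₁.2 s₂), (τ₂.1, .seq τ₂.2 s₂), fun h => ?_⟩
      cases h with
      | seqSkip => exact absurd rfl h₁
      | seqStep h => rcases hτ h with h | h <;> cases h <;> simp
  | dem s₁ s₂ =>
    by_cases hπ : π (ε, .dem s₁ s₂) = true
    · exact ⟨1, by simp, (ε, s₁), (ε, s₂), fun h => by cases h <;> simp_all⟩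
    · exact ⟨1, by simp, (ε, s₂), (ε, s₁), fun h => by cases h <;> simp_all⟩
  | prob e s₁ s₂ =>
    by_cases he : e ε ∈ Set.Icc (0 : ℝ) 1
    · exact ⟨e ε, he, (ε, s₁), (ε, s₂), fun h => by cases h <;> simp⟩
    · exact ⟨1, by simp, (ε, s₁), (ε, s₂), fun h => by cases h <;> simp_all⟩
  | ifte e s₁ s₂ =>
    by_cases he : e ε = true
    · exact ⟨1, by simp, (ε, s₁), (ε, s₂), fun h => by cases h <;> simp_all⟩
    · exact ⟨1, by simp, (ε, s₂), (ε, s₁), fun h => by cases h <;> simp_all⟩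
  | whileLoop e s =>
    by_cases he : e ε = true
    · exact ⟨1, by simp, (ε, .seq s (.whileLoop e s)), (ε, .skip), fun h => by cases h <;> simp_all⟩
    · exact ⟨1, by simp, (ε, .skip), (ε, .skip), fun h => by cases h <;> simp_all⟩

theorem sum_step_prob_le_one (σ : PState) (T : Finset (ℝ × PState))
    (hT : ∀ t ∈ T, Step π σ t.1 t.2) : ∑ t ∈ T, t.1 ≤ 1 := by
  classical
  obtain ⟨q, ⟨hq₀, hq₁⟩, τ₁, τ₂, hτ⟩ := Step.exists_pair (π := π) σ.1 σ.2
  have hsub : T ⊆ {(q, τ₁), (1 - q, τ₂)} := fun t ht => by simpa using hτ (hT t ht)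
  calc ∑ t ∈ T, t.1 ≤ ∑ t ∈ {(q, τ₁), (1 - q, τ₂)}, t.1 :=
        Finset.sum_le_sum_of_subset_of_nonneg hsub fun t ht _ => by
          rcases Finset.mem_insert.mp ht with rfl | ht
          · exact hq₀
          · rw [Finset.mem_singleton.mp ht]; linarith
    _ ≤ q + (1 - q) := by
        by_cases hτ₁₂ : (q, τ₁) = (1 - q, τ₂)
        · rw [hτ₁₂, Finset.pair_eq_singleton, Finset.sum_singleton]; linarith
        · rw [Finset.sum_pair hτ₁₂]
    _ = 1 := by ring

namespace MPath

def length : {σ : PState} → MPath π σ → ℕ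
  | _, .nil _ => 0
  | _, .cons _ _ rest => rest.length + 1

/-- The probability and target of the first transition; `(1, σ)` for the empty path. -/
def firstStep : {σ : PState} → MPath π σ → ℝ × PState
  | _, .nil ε => (1, (ε, .skip))
  | _, @cons _ _ σ' p _ _ => (p, σ')

/-- The path after its first transition; the empty path is its own tail. -/
def tail : {σ : PState} → MPath π σ → Σ σ' : PState, MPath π σ'
  | _, .nil ε => ⟨_, .nil ε⟩
  | _, .cons _ _ rest => ⟨_, rest⟩

theorem prob_nonneg : {σ : PState} → (ρ : MPath π σ) → 0 ≤ ρ.prob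
  | _, .nil _ => zero_le_one
  | _, .cons _ h rest => mul_nonneg h.prob_nonneg rest.prob_nonneg

variable {σ : PState}

theorem prob_eq_mul_tail (ρ : MPath π σ) : ρ.prob = ρ.firstStep.1 * ρ.tail.2.prob := by
  cases ρ <;> simp [prob, firstStep, tail]

theorem tail_fst (ρ : MPath π σ) : ρ.tail.1 = ρ.firstStep.2 := by
  cases ρ <;> rfl

theorem step_firstStep (hσ : σ.2 ≠ .skip) (ρ : MPath π σ) :
    Step π σ ρ.firstStep.1 ρ.firstStep.2 := by
  cases ρ with
  | nil => exact absurd rfl hσ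
  | cons _ h _ => exact h

theorem length_tail (hσ : σ.2 ≠ .skip) (ρ : MPath π σ) : ρ.tail.2.length + 1 = ρ.length := by
  cases ρ with
  | nil => exact absurd rfl hσ
  | cons => rfl

theorem eq_nil {ε : PVal} (ρ : MPath π (ε, .skip)) : ρ = .nil ε := by
  cases ρ with
  | nil => rfl
  | cons _ h _ => cases h

theorem eq_of_firstStep_eq_of_tail_eq {ρ₁ ρ₂ : MPath π σ} (hs : ρ₁.firstStep = ρ₂.firstStep)
    (ht : ρ₁.tail = ρ₂.tail) : ρ₁ = ρ₂ := by
  cases ρ₁ with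
  | nil ε => exact (eq_nil ρ₂).symm
  | cons p₁ h₁ r₁ =>
    cases ρ₂ with
    | nil => cases h₁
    | cons p₂ h₂ r₂ =>
      simp only [firstStep, Prod.mk.injEq] at hs
      obtain ⟨rfl, rfl⟩ := hs
      simp only [tail, Sigma.mk.inj_iff, heq_eq_eq, true_and] at ht
      rw [ht]

end MPath

theorem sum_prob_eq_sum_firstStep [DecidableEq PState] (S : Finset (Σ τ : PState, MPath π τ)) :
    ∑ x ∈ S, x.2.prob
      = ∑ t ∈ S.image (·.2.firstStep), t.1 * ∑ x ∈ S with x.2.firstStep = t, x.2.tail.2.prob := by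
  rw [← Finset.sum_fiberwise_of_maps_to fun x hx => Finset.mem_image_of_mem (·.2.firstStep) hx]
  refine Finset.sum_congr rfl fun t _ => ?_
  rw [Finset.mul_sum]
  refine Finset.sum_congr rfl fun x hx => ?_
  rw [x.2.prob_eq_mul_tail, (Finset.mem_filter.mp hx).2]

theorem sum_prob_le_one_of_length_lt :
    ∀ (n : ℕ) (σ : PState) (S : Finset (Σ τ : PState, MPath π τ)),
      (∀ x ∈ S, x.1 = σ ∧ x.2.length < n) → ∑ x ∈ S, x.2.prob ≤ 1
  | 0, _, S, hS => by
    rw [Finset.eq_empty_of_forall_notMem fun x hx => Nat.not_lt_zero _ (hS x hx).2]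
    simp
  | n + 1, (ε, s), S, hS => by
    classical
    have hstart : ∀ x ∈ S, ∃ ρ : MPath π (ε, s), x = ⟨_, ρ⟩ := by
      rintro ⟨σ, ρ⟩ hx
      obtain rfl : σ = (ε, s) := (hS _ hx).1
      exact ⟨ρ, rfl⟩
    by_cases hs : s = .skip
    · subst hs
      have hsub : S ⊆ {⟨(ε, .skip), .nil ε⟩} := fun x hx => by
        obtain ⟨ρ, rfl⟩ := hstart x hx
        rw [MPath.eq_nil ρ, Finset.mem_singleton]
      rcases Finset.subset_singleton_iff.mp hsub with rfl | rfl <;> simp [MPath.prob]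
    have hsteps : ∀ t ∈ S.image (·.2.firstStep), Step π (ε, s) t.1 t.2 := by
      intro t ht
      obtain ⟨x, hx, rfl⟩ := Finset.mem_image.mp ht
      obtain ⟨ρ, rfl⟩ := hstart x hx
      exact ρ.step_firstStep hs
    have hfiber (t : ℝ × PState) : ∑ x ∈ S with x.2.firstStep = t, x.2.tail.2.prob ≤ 1 := by
      rw [← Finset.sum_image (g := fun x : Σ τ : PState, MPath π τ => x.2.tail)
        (f := fun y : Σ τ : PState, MPath π τ => y.2.prob) ?inj]
      case inj =>
        intro x hx y hy hxy
        obtain ⟨ρ₁, rfl⟩ := hstart x (Finset.mem_filter.mp hx).1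
        obtain ⟨ρ₂, rfl⟩ := hstart y (Finset.mem_filter.mp hy).1
        exact congrArg _ (MPath.eq_of_firstStep_eq_of_tail_eq
          ((Finset.mem_filter.mp hx).2.trans (Finset.mem_filter.mp hy).2.symm) hxy)
      refine sum_prob_le_one_of_length_lt n t.2 _ fun y hy => ?_
      obtain ⟨x, hx, rfl⟩ := Finset.mem_image.mp hy
      obtain ⟨hxS, rfl⟩ := Finset.mem_filter.mp hx
      obtain ⟨ρ, rfl⟩ := hstart x hxS
      have hlen : ρ.length < n + 1 := (hS _ hxS).2
      exact ⟨ρ.tail_fst, show ρ.tail.2.length < n by rw [← MPath.length_tail hs ρ] at hlen; omega⟩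
    calc ∑ x ∈ S, x.2.prob
        = ∑ t ∈ S.image (·.2.firstStep), t.1 * ∑ x ∈ S with x.2.firstStep = t, x.2.tail.2.prob :=
          sum_prob_eq_sum_firstStep S
      _ ≤ ∑ t ∈ S.image (·.2.firstStep), t.1 :=
          Finset.sum_le_sum fun t ht =>
            mul_le_of_le_one_right (hsteps t ht).prob_nonneg (hfiber t)
      _ ≤ 1 := sum_step_prob_le_one (ε, s) _ hsteps

theorem MPath.sum_prob_le_one {σ : PState} (F : Finset (MPath π σ)) : ∑ ρ ∈ F, ρ.prob ≤ 1 := by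
  have h := sum_prob_le_one_of_length_lt (F.sup MPath.length + 1) σ
    (F.map ⟨Sigma.mk σ, sigma_mk_injective⟩) fun x hx => by
      obtain ⟨ρ, hρ, rfl⟩ := Finset.mem_map.mp hx
      exact ⟨rfl, Nat.lt_succ_of_le (Finset.le_sup hρ)⟩
  rwa [Finset.sum_map] at h

theorem MPath.summable_prob (π : Policy) (σ : PState) : Summable fun ρ : MPath π σ => ρ.prob :=
  summable_of_sum_le (fun ρ => ρ.prob_nonneg) MPath.sum_prob_le_one

theorem summable_prob_mul_reward (σ : PState) {r : PVal → ℝ} {C : ℝ} (hr₀ : ∀ v, 0 ≤ r v)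
    (hr : ∀ v, r v ≤ C) : Summable fun ρ : MPath π σ => ρ.prob * r ρ.finalVal :=
  ((MPath.summable_prob π σ).mul_right C).of_nonneg_of_le
    (fun ρ => mul_nonneg ρ.prob_nonneg (hr₀ _))
    (fun ρ => mul_le_mul_of_nonneg_left (hr _) ρ.prob_nonneg)

theorem expReward_nonneg (π : Policy) (σ : PState) {r : PVal → ℝ} (hr : ∀ v, 0 ≤ r v) :
    0 ≤ expReward π σ r :=
  tsum_nonneg fun ρ => mul_nonneg ρ.prob_nonneg (hr _)

theorem expReward_mono (π : Policy) (σ : PState) {r₁ r₂ : PVal → ℝ} {C : ℝ}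
    (h₀ : ∀ v, 0 ≤ r₁ v) (hle : ∀ v, r₁ v ≤ r₂ v) (hC : ∀ v, r₂ v ≤ C) :
    expReward π σ r₁ ≤ expReward π σ r₂ :=
  Summable.tsum_le_tsum (fun ρ => mul_le_mul_of_nonneg_left (hle _) ρ.prob_nonneg)
    (summable_prob_mul_reward σ h₀ fun v => (hle v).trans (hC v))
    (summable_prob_mul_reward σ (fun v => (h₀ v).trans (hle v)) hC)

theorem expectation_mono (σ : PState) {r₁ r₂ : PVal → ℝ} {C : ℝ}
    (h₀ : ∀ v, 0 ≤ r₁ v) (hle : ∀ v, r₁ v ≤ r₂ v) (hC : ∀ v, r₂ v ≤ C) :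
    expectation σ r₁ ≤ expectation σ r₂ :=
  ciInf_mono ⟨0, by rintro _ ⟨π, rfl⟩; exact expReward_nonneg π σ h₀⟩
    fun π => expReward_mono π σ h₀ hle hC

theorem ind_nonneg (P : Prop) : 0 ≤ ind P := by
  unfold ind; split_ifs <;> norm_num

theorem ind_le_one (P : Prop) : ind P ≤ 1 := by
  unfold ind; split_ifs <;> norm_num

theorem ind_mono {P Q : Prop} (h : P → Q) : ind P ≤ ind Q := by
  unfold ind; split_ifs <;> simp_all

theorem sat_ex {l : String} {φ : Formula} {ε : PVal} {η : LEnv} :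
    Sat (Formula.ex l φ) ε η ↔ ∃ v, Sat φ ε (Function.update η l v) := by
  simp [Formula.ex, Sat]

end PGCL

theorem exists_into_pbox_general (ε : PVal) (η : LEnv) (s : Stmt) (φ : Formula)
    (l : String) (p : PVal → ℝ)
    (h : Sat (Formula.ex l (.box s p φ)) ε η) :
    Sat (.box s p (Formula.ex l φ)) ε η := by
  obtain ⟨v, hv⟩ := sat_ex.mp h
  refine hv.trans (expectation_mono _ (fun _ => ind_nonneg _) (fun _ => ind_mono ?_)
    (fun _ => ind_le_one _))
  exact fun hφ => sat_ex.mpr ⟨v, hφ⟩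

/-- The existential quantifier commutes into the p-box:
    if `ε ⊨ ∃l·[s]_p φ` then `ε ⊨ [s]_p (∃l·φ)`. -/
theorem exists_into_pbox (ε : PVal) (η : LEnv) (s : Stmt) (φ : Formula)
    (l : String) (p : PVal → ℝ) (hp : ∀ ε', p ε' ∈ Set.Icc (0 : ℝ) 1)
    (h : Sat (Formula.ex l (.box s p φ)) ε η) :
    Sat (.box s p (Formula.ex l φ)) ε η :=
  exists_into_pbox_general ε η s φ l p h
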